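/- Let (E, M) be a λ-presentable proper factorization system on a locally λ-presentable category 𝒜. Then every morphism f : A → X in E with λ-presentable domain A is a λ-filtered colimit, in the coslice category A/𝒜, of morphisms in E with λ-presentable codomain. -/

import Mathlib

open CategoryTheory CategoryTheory.Limits Opposite

universe w v u

namespace Paper

variable {C : Type u} [Category.{v} C]

/-- A category is `κ`-filtered if every diagram with fewer than `κ` many morphisms
admits a cocone. -/
def IsCardinalFiltered (κ : Cardinal.{v}) (J : Type v) [Category.{v} J] : Prop :=
  ∀ (K : Type v) [Category.{v} K],
    Cardinal.mk (Σ (a : K) (b : K), a ⟶ b) < κ → ∀ F : K ⥤ J, Nonempty (Limits.Cocone F)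

/-- An object `X` is `κ`-presentable if its hom-functor `Hom(X, -)` preserves
`κ`-filtered colimits. -/
def IsPresentableObj (κ : Cardinal.{v}) (X : C) : Prop :=
  ∀ (J : Type v) [Category.{v} J], IsCardinalFiltered κ J →
    Nonempty (PreservesColimitsOfShape J (coyoneda.obj (op X)))

/-- A category is locally `κ`-presentable if it is cocomplete and has a small family of
`κ`-presentable objects such that every object is a `κ`-filtered colimit of objects
from this family. -/
def LocallyPresentable (κ : Cardinal.{v}) (C : Type u) [Category.{v} C] : Prop :=
  HasColimits C ∧
    ∃ S : Set C, Small.{v} S ∧ (∀ X ∈ S, IsPresentableObj κ X) ∧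
      ∀ X : C, ∃ (J : Type v) (_ : Category.{v} J) (F : J ⥤ C) (c : Limits.Cocone F),
        IsCardinalFiltered κ J ∧ Nonempty (Limits.IsColimit c) ∧ c.pt = X ∧
          ∀ j, F.obj j ∈ S

/-- `e ⊥ m`: every commutative square from `e` to `m` has a unique diagonal filler. -/
def UniqueLift {A B X Y : C} (e : A ⟶ B) (m : X ⟶ Y) : Prop :=
  ∀ (u : A ⟶ X) (v : B ⟶ Y), u ≫ m = e ≫ v →
    ∃! d : B ⟶ X, e ≫ d = u ∧ d ≫ m = v

/-- `p : X ⟶ Y` is a `κ`-local retraction if every morphism from a `κ`-presentable object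
into `Y` lifts along `p`. -/
def IsLocalRetraction (κ : Cardinal.{v}) {X Y : C} (p : X ⟶ Y) : Prop :=
  ∀ (Γ : C), IsPresentableObj κ Γ → ∀ f : Γ ⟶ Y, ∃ g : Γ ⟶ X, g ≫ p = f

variable {C : Type u} [Category.{v} C]

/-! ### Small shape categories -/

inductive PP : Type v where
  | a | b

def PPHom : PP.{v} → PP.{v} → Type v
  | .a, .a => PUnit
  | .a, .b => ULift Bool
  | .b, .a => PEmpty
  | .b, .b => PUnit

instance : Category.{v} PP.{v} where
  Hom := PPHom
  id x := match x with
    | .a => PUnit.unit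
    | .b => PUnit.unit
  comp {x y z} f g := match x, y, z, f, g with
    | .a, .a, _, _, g => g
    | .a, .b, .b, f, _ => f
    | .b, .b, .b, _, _ => PUnit.unit
    | .a, .b, .a, _, g => g.elim
    | .b, .a, _, f, _ => f.elim
    | .b, .b, .a, _, g => g.elim
  id_comp {x y} f := by cases x <;> cases y <;> first | exact f.elim | rfl
  comp_id {x y} f := by cases x <;> cases y <;> first | exact f.elim | rfl
  assoc {w x y z} f g h := by
    cases w <;> cases x <;> cases y <;> cases z <;>
      first | exact f.elim | exact g.elim | exact h.elim | rfl

def PP.arr (t : Bool) : (PP.a : PP.{v}) ⟶ PP.b := ULift.up t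

def ppDiag {X Y : C} (f g : X ⟶ Y) : PP.{v} ⥤ C where
  obj x := match x with
    | .a => X
    | .b => Y
  map {x y} u := match x, y, u with
    | .a, .a, _ => 𝟙 X
    | .b, .b, _ => 𝟙 Y
    | .a, .b, u => match u.down with
      | true => f
      | false => g
    | .b, .a, u => u.elim
  map_id x := by cases x <;> rfl
  map_comp {x y z} u w := by
    cases x <;> cases y <;> cases z <;>
      first | exact u.elim | exact w.elim | (simp; try rfl)

lemma ppDiag_arr {X Y : C} (f g : X ⟶ Y) :
    (ppDiag f g).map (PP.arr true) = f ∧ (ppDiag f g).map (PP.arr false) = g :=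
  ⟨rfl, rfl⟩

instance : Finite PP.{v} :=
  Finite.of_injective (fun x => match x with | .a => true | .b => false)
    (by intro x y h; cases x <;> cases y <;> simp_all)

lemma pp_sigma_lt {κ : Cardinal.{v}} (hreg : κ.IsRegular) :
    Cardinal.mk (Σ (a : PP.{v}) (b : PP.{v}), a ⟶ b) < κ := by
  have hsurj : Function.Surjective
      (fun p : PP.{v} × PP.{v} × ULift.{v} Bool =>
        (match p with
          | (.a, .a, _) => ⟨.a, .a, PUnit.unit⟩
          | (.a, .b, u) => ⟨.a, .b, ULift.up u.down⟩
          | (.b, .b, _) => ⟨.b, .b, PUnit.unit⟩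
          | (.b, .a, _) => ⟨.b, .b, PUnit.unit⟩ :
          Σ (a : PP.{v}) (b : PP.{v}), a ⟶ b)) := by
    rintro ⟨x, y, f⟩
    cases x <;> cases y
    · exact ⟨(.a, .a, ULift.up true), rfl⟩
    · exact ⟨(.a, .b, ULift.up (ULift.down f)), rfl⟩
    · exact f.elim
    · exact ⟨(.b, .b, ULift.up true), rfl⟩
  refine lt_of_le_of_lt (Cardinal.mk_le_of_surjective hsurj) ?_
  exact lt_of_lt_of_le (Cardinal.lt_aleph0_of_finite _) hreg.aleph0_le

lemma discrete_sigma_lt {κ : Cardinal.{v}} (hreg : κ.IsRegular) {T : Type v}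
    (hT : Cardinal.mk T < κ) :
    Cardinal.mk (Σ (a : Discrete T) (b : Discrete T), a ⟶ b) < κ := by
  have hsurj : Function.Surjective
      (fun t : T => (⟨⟨t⟩, ⟨t⟩, 𝟙 _⟩ : Σ (a : Discrete T) (b : Discrete T), a ⟶ b)) := by
    rintro ⟨⟨x⟩, ⟨y⟩, f⟩
    obtain rfl : x = y := f.down.down
    refine ⟨x, ?_⟩
    have hf : (𝟙 (⟨x⟩ : Discrete T)) = f := Subsingleton.elim _ _
    dsimp only
    rw [hf]
  exact lt_of_le_of_lt (Cardinal.mk_le_of_surjective hsurj) hT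

lemma widePushout_sigma_lt {κ : Cardinal.{v}} (hreg : κ.IsRegular) {T : Type v}
    (hT : Cardinal.mk T < κ) :
    Cardinal.mk (Σ (a : WidePushoutShape T) (b : WidePushoutShape T), a ⟶ b) < κ := by
  have hsurj : Function.Surjective
      (fun p : Option T ⊕ T =>
        (match p with
          | Sum.inl x => ⟨x, x, WidePushoutShape.Hom.id x⟩
          | Sum.inr j => ⟨none, some j, WidePushoutShape.Hom.init j⟩ :
          Σ (a : WidePushoutShape T) (b : WidePushoutShape T), a ⟶ b)) := by
    rintro ⟨a, b, f⟩
    change WidePushoutShape.Hom _ _ at f; cases f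
    case id => exact ⟨Sum.inl a, rfl⟩
    case init j => exact ⟨Sum.inr j, rfl⟩
  refine lt_of_le_of_lt (Cardinal.mk_le_of_surjective hsurj) ?_
  rw [← Cardinal.add_def, Cardinal.mk_option]
  exact Cardinal.add_lt_of_lt hreg.aleph0_le
    (Cardinal.add_lt_of_lt hreg.aleph0_le hT
      (lt_of_lt_of_le Cardinal.one_lt_aleph0 hreg.aleph0_le)) hT

lemma mk_obj_le_sigma (K : Type v) [Category.{v} K] :
    Cardinal.mk K ≤ Cardinal.mk (Σ (a : K) (b : K), a ⟶ b) :=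
  Cardinal.mk_le_of_injective (f := fun k => ⟨k, k, 𝟙 k⟩)
    (fun _ _ h => congrArg Sigma.fst h)

lemma withInitial_sigma_lt {κ : Cardinal.{v}} (hreg : κ.IsRegular) {K : Type v}
    [Category.{v} K] (hK : Cardinal.mk (Σ (a : K) (b : K), a ⟶ b) < κ) :
    Cardinal.mk (Σ (a : WithInitial K) (b : WithInitial K), a ⟶ b) < κ := by
  have hsurj : Function.Surjective
      (fun p : (Σ (a : K) (b : K), a ⟶ b) ⊕ Option K =>
        (match p with
          | Sum.inl ⟨a, b, f⟩ => ⟨.of a, .of b, f⟩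
          | Sum.inr (some k) => ⟨.star, .of k, PUnit.unit⟩
          | Sum.inr none => ⟨.star, .star, PUnit.unit⟩ :
          Σ (a : WithInitial K) (b : WithInitial K), a ⟶ b)) := by
    rintro ⟨a, b, f⟩
    cases a with
    | of a =>
      cases b with
      | of b => exact ⟨Sum.inl ⟨a, b, WithInitial.down f⟩, rfl⟩
      | star => exact (WithInitial.false_of_to_star f).elim
    | star =>
      cases b with
      | of b => exact ⟨Sum.inr (some b), rfl⟩
      | star => exact ⟨Sum.inr none, rfl⟩
  refine lt_of_le_of_lt (Cardinal.mk_le_of_surjective hsurj) ?_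
  rw [← Cardinal.add_def, Cardinal.mk_option]
  refine Cardinal.add_lt_of_lt hreg.aleph0_le hK
    (Cardinal.add_lt_of_lt hreg.aleph0_le
      (lt_of_le_of_lt (mk_obj_le_sigma K) hK)
      (lt_of_lt_of_le Cardinal.one_lt_aleph0 hreg.aleph0_le))

/-! ### Filteredness -/

lemma isFiltered_of_isCardinalFiltered {κ : Cardinal.{v}} (hreg : κ.IsRegular)
    (J : Type v) [Category.{v} J] (h : IsCardinalFiltered κ J) : IsFiltered J := by
  haveI : IsEmpty (Discrete PEmpty.{v + 1}) := ⟨fun x => x.as.elim⟩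
  have hne : Nonempty J := by
    obtain ⟨c⟩ := h (Discrete PEmpty.{v + 1})
      (by
        rw [Cardinal.mk_eq_zero]
        exact lt_of_lt_of_le Cardinal.aleph0_pos hreg.aleph0_le)
      (Functor.empty.{v} J)
    exact ⟨c.pt⟩
  haveI : IsFilteredOrEmpty J := by
    constructor
    · intro X Y
      obtain ⟨c⟩ := h (Discrete (ULift.{v} Bool))
        (discrete_sigma_lt hreg
          (lt_of_lt_of_le (Cardinal.lt_aleph0_of_finite _) hreg.aleph0_le))
        (Discrete.functor (fun b => bif b.down then X else Y))
      exact ⟨c.pt, c.ι.app ⟨ULift.up true⟩, c.ι.app ⟨ULift.up false⟩, trivial⟩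
    · intro X Y f g
      obtain ⟨c⟩ := h PP.{v} (pp_sigma_lt hreg) (ppDiag f g)
      refine ⟨c.pt, c.ι.app .b, ?_⟩
      have h1 := c.w (PP.arr true)
      have h2 := c.w (PP.arr false)
      rw [(ppDiag_arr f g).1] at h1
      rw [(ppDiag_arr f g).2] at h2
      erw [h1, h2]
  haveI := hne
  exact ⟨⟩

/-! ### Presentable objects and filtered colimits -/

lemma factor_through {κ : Cardinal.{v}} {J : Type v} [Category.{v} J]
    (hfil : IsCardinalFiltered κ J) {F : J ⥤ C} {t : Cocone F} (ht : IsColimit t)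
    {Z : C} (hZ : IsPresentableObj κ Z) (h : Z ⟶ t.pt) :
    ∃ (j : J) (g : Z ⟶ F.obj j), g ≫ t.ι.app j = h := by
  obtain ⟨hp⟩ := hZ J hfil
  have ht' := isColimitOfPreserves (coyoneda.obj (op Z)) ht
  obtain ⟨j, y, hy⟩ := Types.jointly_surjective _ ht' h
  exact ⟨j, y, hy⟩

lemma equalize_through {κ : Cardinal.{v}} (hreg : κ.IsRegular) {J : Type v} [Category.{v} J]
    (hfil : IsCardinalFiltered κ J) {F : J ⥤ C} {t : Cocone F} (ht : IsColimit t)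
    {Z : C} (hZ : IsPresentableObj κ Z) {j : J} (g₁ g₂ : Z ⟶ F.obj j)
    (hg : g₁ ≫ t.ι.app j = g₂ ≫ t.ι.app j) :
    ∃ (j' : J) (φ : j ⟶ j'), g₁ ≫ F.map φ = g₂ ≫ F.map φ := by
  haveI : IsFiltered J := isFiltered_of_isCardinalFiltered hreg J hfil
  obtain ⟨hp⟩ := hZ J hfil
  have ht' := isColimitOfPreserves (coyoneda.obj (op Z)) ht
  have hmem : ((coyoneda.obj (op Z)).mapCocone t).ι.app j g₁ =
      ((coyoneda.obj (op Z)).mapCocone t).ι.app j g₂ := hg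
  obtain ⟨k, u, w, he⟩ := (Types.FilteredColimit.isColimit_eq_iff _ ht').mp hmem
  obtain ⟨l, q, hq⟩ := IsFilteredOrEmpty.cocone_maps u w
  refine ⟨l, u ≫ q, ?_⟩
  have he' : g₁ ≫ F.map u = g₂ ≫ F.map w := he
  have h2 : g₁ ≫ F.map (u ≫ q) = g₂ ≫ F.map (w ≫ q) := by
    rw [F.map_comp, F.map_comp, ← Category.assoc, ← Category.assoc, he']
  rw [h2, hq]

lemma presentable_of_iso {κ : Cardinal.{v}} {B B' : C} (hB : IsPresentableObj κ B)
    (ψ : B ≅ B') : IsPresentableObj κ B' := by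
  intro J instJ hfil
  obtain ⟨hp⟩ := hB J hfil
  exact ⟨preservesColimitsOfShape_of_natIso (coyoneda.mapIso ψ.op).symm⟩

/-- A `< κ`-small colimit of `κ`-presentable objects is `κ`-presentable. -/
lemma presentable_colimit_of_small {κ : Cardinal.{v}} (hreg : κ.IsRegular)
    {K : Type v} [Category.{v} K]
    (hK : Cardinal.mk (Σ (a : K) (b : K), a ⟶ b) < κ) {G : K ⥤ C}
    (hobj : ∀ k, IsPresentableObj κ (G.obj k)) {c : Cocone G} (hc : IsColimit c) :
    IsPresentableObj κ c.pt := by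
  intro Jf instJf hfil
  haveI : IsFiltered Jf := isFiltered_of_isCardinalFiltered hreg Jf hfil
  refine ⟨⟨fun {F} => ⟨fun {t} ht => ⟨?_⟩⟩⟩⟩
  apply Types.FilteredColimit.isColimitOf
  · -- joint surjectivity
    intro x
    choose jk gk hk using fun k : K =>
      factor_through hfil ht (hobj k) (c.ι.app k ≫ (x : c.pt ⟶ t.pt))
    obtain ⟨c₁⟩ := hfil (Discrete K)
      (discrete_sigma_lt hreg (lt_of_le_of_lt (mk_obj_le_sigma K) hK))
      (Discrete.functor jk)
    have φ : ∀ k : K, jk k ⟶ c₁.pt := fun k => c₁.ι.app ⟨k⟩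
    have hg' : ∀ k : K, (gk k ≫ F.map (φ k)) ≫ t.ι.app c₁.pt
        = c.ι.app k ≫ (x : c.pt ⟶ t.pt) := by
      intro k
      rw [Category.assoc, t.w (φ k)]
      exact hk k
    have heq : ∀ ψ : Σ (a : K) (b : K), a ⟶ b, ∃ (jj : Jf) (χ : c₁.pt ⟶ jj),
        (G.map ψ.2.2 ≫ gk ψ.2.1 ≫ F.map (φ ψ.2.1)) ≫ F.map χ
          = (gk ψ.1 ≫ F.map (φ ψ.1)) ≫ F.map χ := by
      rintro ⟨a, b, m⟩
      apply equalize_through hreg hfil ht (hobj a)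
      rw [Category.assoc (G.map m), hg' b, hg' a, ← Category.assoc, c.w m]
    choose jψ χ hχ using heq
    obtain ⟨c₂⟩ := hfil (WidePushoutShape (Σ (a : K) (b : K), a ⟶ b))
      (widePushout_sigma_lt hreg hK)
      (WidePushoutShape.wideSpan c₁.pt jψ χ)
    obtain ⟨ρ, σ, hρ⟩ : ∃ (ρ : c₁.pt ⟶ c₂.pt) (σ : ∀ ψ, jψ ψ ⟶ c₂.pt),
        ∀ ψ, χ ψ ≫ σ ψ = ρ :=
      ⟨c₂.ι.app none, fun ψ => c₂.ι.app (some ψ),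
        fun ψ => c₂.w (WidePushoutShape.Hom.init ψ)⟩
    have hnat : ∀ {a b : K} (m : a ⟶ b),
        G.map m ≫ ((gk b ≫ F.map (φ b)) ≫ F.map ρ)
          = (gk a ≫ F.map (φ a)) ≫ F.map ρ := by
      intro a b m
      have hA := hχ ⟨a, b, m⟩
      simp only [← Category.assoc] at hA
      rw [← hρ ⟨a, b, m⟩]
      simp only [Functor.map_comp, ← Category.assoc]
      rw [hA]
    let s : Cocone G :=
      { pt := F.obj c₂.pt
        ι :=
          { app := fun k => (gk k ≫ F.map (φ k)) ≫ F.map ρ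
            naturality := fun a b m => by
              dsimp only [Functor.const_obj_map, Functor.const_obj_obj]
              exact (hnat m).trans (Category.comp_id _).symm } }
    refine ⟨c₂.pt, hc.desc s, ?_⟩
    show (x : c.pt ⟶ t.pt) = hc.desc s ≫ t.ι.app c₂.pt
    apply hc.hom_ext
    intro k
    rw [← Category.assoc, hc.fac s k]
    show c.ι.app k ≫ (x : c.pt ⟶ t.pt)
      = ((gk k ≫ F.map (φ k)) ≫ F.map ρ) ≫ t.ι.app c₂.pt
    rw [Category.assoc (gk k ≫ F.map (φ k)), t.w ρ, hg' k]

  · -- eventual equality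
    intro j₁ j₂ x₁ x₂ hx
    have hx' : (x₁ : c.pt ⟶ F.obj j₁) ≫ t.ι.app j₁
        = (x₂ : c.pt ⟶ F.obj j₂) ≫ t.ι.app j₂ := hx
    have hek : ∀ k : K, ∃ (jj : Jf) (χ : IsFiltered.max j₁ j₂ ⟶ jj),
        (c.ι.app k ≫ (x₁ : c.pt ⟶ F.obj j₁) ≫ F.map (IsFiltered.leftToMax j₁ j₂)) ≫ F.map χ
          = (c.ι.app k ≫ (x₂ : c.pt ⟶ F.obj j₂) ≫ F.map (IsFiltered.rightToMax j₁ j₂))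
              ≫ F.map χ := by
      intro k
      apply equalize_through hreg hfil ht (hobj k)
      simp only [Category.assoc]
      rw [t.w (IsFiltered.leftToMax j₁ j₂), t.w (IsFiltered.rightToMax j₁ j₂)]
      exact congrArg (fun z => c.ι.app k ≫ z) hx'
    choose jk χk hχk using hek
    obtain ⟨c₂⟩ := hfil (WidePushoutShape K)
      (widePushout_sigma_lt hreg (lt_of_le_of_lt (mk_obj_le_sigma K) hK))
      (WidePushoutShape.wideSpan (IsFiltered.max j₁ j₂) jk χk)
    obtain ⟨ρ, σ, hρ⟩ : ∃ (ρ : IsFiltered.max j₁ j₂ ⟶ c₂.pt) (σ : ∀ k, jk k ⟶ c₂.pt),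
        ∀ k, χk k ≫ σ k = ρ :=
      ⟨c₂.ι.app none, fun k => c₂.ι.app (some k),
        fun k => c₂.w (WidePushoutShape.Hom.init k)⟩
    refine ⟨c₂.pt, IsFiltered.leftToMax j₁ j₂ ≫ ρ,
      IsFiltered.rightToMax j₁ j₂ ≫ ρ, ?_⟩
    show (x₁ : c.pt ⟶ F.obj j₁) ≫ F.map (IsFiltered.leftToMax j₁ j₂ ≫ ρ)
      = (x₂ : c.pt ⟶ F.obj j₂) ≫ F.map (IsFiltered.rightToMax j₁ j₂ ≫ ρ)
    apply hc.hom_ext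
    intro k
    have h1 := hχk k
    rw [← hρ k]
    simp only [Functor.map_comp, ← Category.assoc] at h1 ⊢
    rw [h1]

/-! ### Orthogonal factorization systems -/
section FS

variable (E M : MorphismProperty C)

/-- A morphism with unique lifts against all of `M` belongs to `E`. -/
lemma mem_E_of_lifts
    (hEiso : ∀ {X Y : C} (e : X ⟶ Y), IsIso e → E e)
    (hEcomp : ∀ {X Y Z : C} (e : X ⟶ Y) (e' : Y ⟶ Z), E e → E e' → E (e ≫ e'))
    (hfact : ∀ {X Y : C} (f : X ⟶ Y),
      ∃ (Z : C) (e : X ⟶ Z) (m : Z ⟶ Y), E e ∧ M m ∧ e ≫ m = f)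
    (hmono : ∀ {X Y : C} (m : X ⟶ Y), M m → Mono m)
    {X Y : C} (e : X ⟶ Y)
    (hlift : ∀ {X' Y' : C} (m : X' ⟶ Y'), M m → UniqueLift e m) : E e := by
  obtain ⟨Z, e₁, m₁, hE1, hM1, hcomp⟩ := hfact e
  obtain ⟨d, ⟨hd1, hd2⟩, -⟩ := hlift m₁ hM1 e₁ (𝟙 Y)
    (by rw [hcomp, Category.comp_id])
  haveI : Mono m₁ := hmono m₁ hM1
  haveI : IsIso m₁ := by
    refine ⟨d, ?_, hd2⟩
    rw [← cancel_mono m₁, Category.assoc, hd2, Category.comp_id, Category.id_comp]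
  rw [← hcomp]
  exact hEcomp _ _ hE1 (hEiso m₁ inferInstance)

/-- The structure map from the cocone point of an augmented colimit has unique lifts
against `M`, provided all the augmentation legs do. -/
lemma star_leg_lifts {K : Type v} [Category.{v} K] {Z : C} (G : K ⥤ C)
    (η : ∀ k, Z ⟶ G.obj k) (hη : ∀ (x y : K) (f : x ⟶ y), η x ≫ G.map f = η y)
    {c : Cocone (WithInitial.lift G η hη)} (hc : IsColimit c)
    (hlift : ∀ (k : K) {X' Y' : C} (m : X' ⟶ Y'), M m → UniqueLift (η k) m)
    {X' Y' : C} (m : X' ⟶ Y') (hm : M m) : UniqueLift (c.ι.app .star) m := by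
  intro u v hsq
  have hstar : ∀ k, η k ≫ c.ι.app (.of k) = c.ι.app .star := fun k =>
    c.w (WithInitial.homTo k)
  have hdk : ∀ k : K, ∃! d : G.obj k ⟶ X',
      η k ≫ d = u ∧ d ≫ m = c.ι.app (.of k) ≫ v := fun k =>
    hlift k m hm u (c.ι.app (.of k) ≫ v)
      (by erw [hsq, ← hstar k, Category.assoc]; rfl)
  let dk : ∀ k, G.obj k ⟶ X' := fun k => (hdk k).choose
  have hdk1 : ∀ k, η k ≫ dk k = u := fun k => (hdk k).choose_spec.1.1
  have hdk2 : ∀ k, dk k ≫ m = c.ι.app (.of k) ≫ v := fun k => (hdk k).choose_spec.1.2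
  have hdku : ∀ k (d' : G.obj k ⟶ X'), η k ≫ d' = u → d' ≫ m = c.ι.app (.of k) ≫ v →
      d' = dk k := fun k d' h1 h2 => (hdk k).choose_spec.2 d' ⟨h1, h2⟩
  let s : Cocone (WithInitial.lift G η hη) :=
    { pt := X'
      ι :=
        { app := fun j => match j with
            | .of k => dk k
            | .star => u
          naturality := by
            intro j j' φ
            cases j with
            | star =>
              cases j' with
              | star => simp; exact Category.id_comp u
              | of k =>
                have : (WithInitial.lift G η hη).map φ = η k := rfl
                dsimp only [Functor.const_obj_map, Functor.const_obj_obj]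
                rw [Category.comp_id, this]
                exact hdk1 k
            | of k =>
              cases j' with
              | star => exact (WithInitial.false_of_to_star φ).elim
              | of k' =>
                have : (WithInitial.lift G η hη).map φ = G.map (WithInitial.down φ) := rfl
                dsimp only [Functor.const_obj_map, Functor.const_obj_obj]
                erw [Category.comp_id, this]
                refine hdku k _ ?_ ?_
                · erw [← Category.assoc, hη k k' (WithInitial.down φ), hdk1 k']
                · erw [Category.assoc, hdk2 k', ← Category.assoc]
                  congr 1
                  exact c.w (WithInitial.incl.map (WithInitial.down φ))
            } }
  refine ⟨hc.desc s, ⟨hc.fac s .star, ?_⟩, ?_⟩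
  · apply hc.hom_ext
    intro j
    cases j with
    | star =>
      rw [← Category.assoc, hc.fac s .star]
      show u ≫ m = c.ι.app .star ≫ v
      exact hsq
    | of k =>
      rw [← Category.assoc, hc.fac s (.of k)]
      exact hdk2 k
  · rintro d' ⟨h1, h2⟩
    apply hc.hom_ext
    intro j
    cases j with
    | star =>
      rw [hc.fac s .star]
      exact h1
    | of k =>
      rw [hc.fac s (.of k)]
      show c.ι.app (.of k) ≫ d' = dk k
      refine hdku k _ ?_ ?_
      · erw [← Category.assoc, hstar k]
        exact h1
      · erw [Category.assoc, h2]; rfl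

/-! ### Two-legged wide pushouts -/

def pairObjs (Y₁ Y₂ : C) : ULift.{v} Bool → C := fun b => bif b.down then Y₁ else Y₂

def pairArrows {Z Y₁ Y₂ : C} (u₁ : Z ⟶ Y₁) (e' : Z ⟶ Y₂) :
    ∀ b, Z ⟶ pairObjs Y₁ Y₂ b := fun b => match b with
  | ⟨true⟩ => u₁
  | ⟨false⟩ => e'

def pushoutDiag {Z Y₁ Y₂ : C} (u₁ : Z ⟶ Y₁) (e' : Z ⟶ Y₂) :
    WidePushoutShape (ULift.{v} Bool) ⥤ C :=
  WidePushoutShape.wideSpan Z (pairObjs Y₁ Y₂) (pairArrows u₁ e')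

lemma pushout_inl_lifts {Z Y₁ Y₂ : C} (u₁ : Z ⟶ Y₁) (e' : Z ⟶ Y₂)
    {c : Cocone (pushoutDiag u₁ e')} (hc : IsColimit c)
    (hlift : ∀ {X' Y' : C} (m : X' ⟶ Y'), M m → UniqueLift e' m)
    {X' Y' : C} (m : X' ⟶ Y') (hm : M m) :
    UniqueLift (c.ι.app (some (ULift.up true)) : Y₁ ⟶ c.pt) m := by
  obtain ⟨ι₀, inl, inr, hw1, hw2, hι0, hι, hinr⟩ :
      ∃ (ι₀ : Z ⟶ c.pt) (inl : Y₁ ⟶ c.pt) (inr : Y₂ ⟶ c.pt),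
        u₁ ≫ inl = ι₀ ∧ e' ≫ inr = ι₀ ∧ ι₀ = c.ι.app none ∧
          inl = c.ι.app (some (ULift.up true)) ∧ inr = c.ι.app (some (ULift.up false)) :=
    ⟨c.ι.app none, c.ι.app (some (ULift.up true)), c.ι.app (some (ULift.up false)),
      c.w (WidePushoutShape.Hom.init (ULift.up true)),
      c.w (WidePushoutShape.Hom.init (ULift.up false)), rfl, rfl, rfl⟩
  subst hι0 hι hinr
  intro u v hsq
  obtain ⟨d₁, ⟨hd1, hd2⟩, hdu⟩ := hlift m hm (u₁ ≫ u) (c.ι.app (some (ULift.up false)) ≫ v)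
    (by erw [Category.assoc, hsq, ← Category.assoc, hw1, ← hw2, Category.assoc])
  let s : Cocone (pushoutDiag u₁ e') :=
    { pt := X'
      ι :=
        { app := fun j => match j with
            | none => u₁ ≫ u
            | some ⟨true⟩ => u
            | some ⟨false⟩ => d₁
          naturality := by
            intro j j' φ
            change WidePushoutShape.Hom _ _ at φ; cases φ with
            | id j => simp
            | init b =>
              obtain ⟨b⟩ := b
              cases b with
              | true =>
                show u₁ ≫ u = (u₁ ≫ u) ≫ 𝟙 X'
                rw [Category.comp_id]
              | false =>
                show e' ≫ d₁ = (u₁ ≫ u) ≫ 𝟙 X'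
                rw [Category.comp_id, hd1] } }
  have hfacn : c.ι.app none ≫ hc.desc s = u₁ ≫ u := hc.fac s none
  have hfact : c.ι.app (some (ULift.up true)) ≫ hc.desc s = u := hc.fac s (some (ULift.up true))
  have hfacf : c.ι.app (some (ULift.up false)) ≫ hc.desc s = d₁ := hc.fac s (some (ULift.up false))
  refine ⟨hc.desc s, ⟨hfact, ?_⟩, ?_⟩
  · apply hc.hom_ext
    intro j
    rw [← Category.assoc]
    cases j with
    | none =>
      erw [hfacn, Category.assoc, hsq, ← Category.assoc, hw1]
    | some b =>
      obtain ⟨b⟩ := b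
      cases b with
      | true => rw [hfact, hsq]
      | false => erw [hfacf, hd2]; rfl
  · rintro d' ⟨h1, h2⟩
    apply hc.hom_ext
    intro j
    cases j with
    | none =>
      erw [hfacn, ← hw1, Category.assoc, h1]; rfl
    | some b =>
      obtain ⟨b⟩ := b
      cases b with
      | true => rw [hfact, h1]
      | false =>
        rw [hfacf]
        refine hdu _ ⟨?_, ?_⟩
        · erw [← Category.assoc, hw2, ← hw1, Category.assoc, h1]
        · erw [Category.assoc, h2]

end FS

/-! ### Split idempotents via `PP`-colimits -/

lemma pp_split_iso [HasColimitsOfShape PP.{v} C] {Z B : C} (r : Z ⟶ B) (sB : B ⟶ Z)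
    (h : sB ≫ r = 𝟙 B) : Nonempty (colimit (ppDiag (𝟙 Z) (r ≫ sB)) ≅ B) := by
  let cB : Cocone (ppDiag (𝟙 Z) (r ≫ sB)) :=
    { pt := B
      ι :=
        { app := fun j => match j with
            | .a => r
            | .b => r
          naturality := by
            intro x y φ
            cases x <;> cases y
            · show 𝟙 Z ≫ r = r ≫ 𝟙 B
              rw [Category.id_comp, Category.comp_id]
            · obtain ⟨b⟩ := φ
              cases b with
              | true =>
                show 𝟙 Z ≫ r = r ≫ 𝟙 B
                rw [Category.id_comp, Category.comp_id]
              | false =>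
                show (r ≫ sB) ≫ r = r ≫ 𝟙 B
                rw [Category.assoc, h, Category.comp_id]
            · exact φ.elim
            · show 𝟙 Z ≫ r = r ≫ 𝟙 B
              rw [Category.id_comp, Category.comp_id] } }
  have hcB : IsColimit cB :=
    { desc := fun s => sB ≫ s.ι.app .b
      fac := fun s j => by
        obtain ⟨ha, hb⟩ : (𝟙 Z) ≫ s.ι.app PP.b = s.ι.app PP.a ∧
            (r ≫ sB) ≫ s.ι.app PP.b = s.ι.app PP.a :=
          ⟨s.w (PP.arr true), s.w (PP.arr false)⟩
        have hba : s.ι.app PP.b = s.ι.app PP.a := by erw [← ha, Category.id_comp]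
        cases j with
        | a =>
          show r ≫ sB ≫ s.ι.app PP.b = s.ι.app PP.a
          erw [← Category.assoc, hb]
        | b =>
          show r ≫ sB ≫ s.ι.app PP.b = s.ι.app PP.b
          erw [← Category.assoc, hb, ← hba]
      uniq := fun s dm hm => by
        have hb2 : r ≫ dm = s.ι.app PP.b := hm PP.b
        show dm = sB ≫ s.ι.app PP.b
        rw [← hb2, ← Category.assoc, h, Category.id_comp] }
  exact ⟨(colimit.isColimit _).coconePointUniqueUpToIso hcB⟩

lemma ppColim_congr [HasColimitsOfShape PP.{v} C] {Z Z' : C} (h : Z' = Z) (p : Z ⟶ Z) :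
    Nonempty (colimit (ppDiag (𝟙 Z') (eqToHom h ≫ p ≫ eqToHom h.symm)) ≅
      colimit (ppDiag (𝟙 Z) p)) := by
  subst h
  exact ⟨eqToIso (by simp)⟩

/-- Every `κ`-presentable object is isomorphic to a canonical split-idempotent colimit
on an object of `S`. -/
lemma exists_iso_ob {κ : Cardinal.{v}} [HasColimitsOfShape PP.{v} C] {S : Set C}
    (hdecomp : ∀ X : C, ∃ (J : Type v) (_ : Category.{v} J) (F : J ⥤ C) (c : Cocone F),
        IsCardinalFiltered κ J ∧ Nonempty (IsColimit c) ∧ c.pt = X ∧ ∀ j, F.obj j ∈ S)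
    {B : C} (hB : IsPresentableObj κ B) :
    ∃ (Z : S) (p : (Z : C) ⟶ (Z : C)),
      Nonempty (colimit (ppDiag (𝟙 (Z : C)) p) ≅ B) := by
  obtain ⟨J₁, inst₁, F₁, c₁, hfil₁, ⟨hcolim₁⟩, hpt, hmem⟩ := hdecomp B
  subst hpt
  obtain ⟨i, sB, hs⟩ := factor_through hfil₁ hcolim₁ hB (𝟙 c₁.pt)
  exact ⟨⟨F₁.obj i, hmem i⟩, c₁.ι.app i ≫ sB, pp_split_iso (c₁.ι.app i) sB hs⟩


/-! ### The index category of presentable `E`-quotients over `f` -/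

variable (κ : Cardinal.{v}) (E : MorphismProperty C) {ι : Type v} (Ob : ι → C)
  {A X : C} (f : A ⟶ X)

structure JObj : Type v where
  w : ι
  e : A ⟶ Ob w
  u : Ob w ⟶ X
  hE : E e
  heu : e ≫ u = f
  hpres : IsPresentableObj κ (Ob w)

variable {κ E Ob f}

structure JHom (x y : JObj κ E Ob f) : Type v where
  t : Ob x.w ⟶ Ob y.w
  he : x.e ≫ t = y.e
  hu : t ≫ y.u = x.u

lemma JHom.ext' {x y : JObj κ E Ob f} {φ ψ : JHom x y} (h : φ.t = ψ.t) : φ = ψ := by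
  cases φ; cases ψ; cases h; rfl

instance : Category.{v} (JObj κ E Ob f) where
  Hom := JHom
  id x := ⟨𝟙 _, Category.comp_id _, by rw [Category.id_comp]⟩
  comp φ ψ := ⟨φ.t ≫ ψ.t, by rw [← Category.assoc, φ.he, ψ.he],
    by rw [Category.assoc, ψ.hu, φ.hu]⟩
  id_comp φ := JHom.ext' (Category.id_comp φ.t)
  comp_id φ := JHom.ext' (Category.comp_id φ.t)
  assoc φ ψ χ := JHom.ext' (Category.assoc φ.t ψ.t χ.t)

@[simp] lemma JHom.id_t (x : JObj κ E Ob f) : (𝟙 x : JHom x x).t = 𝟙 (Ob x.w) := rfl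

@[simp] lemma JHom.comp_t {x y z : JObj κ E Ob f} (φ : x ⟶ y) (ψ : y ⟶ z) :
    (φ ≫ ψ).t = φ.t ≫ ψ.t := rfl

/-- The forgetful functor to `C`. -/
def JObj.toC : JObj κ E Ob f ⥤ C where
  obj x := Ob x.w
  map φ := φ.t

/-- The augmented diagram over `WithInitial K`. -/
def JObj.aug {K : Type v} [Category.{v} K] (G : K ⥤ JObj κ E Ob f) : WithInitial K ⥤ C :=
  WithInitial.lift (G ⋙ JObj.toC) (fun k => (G.obj k).e) (fun _ _ m => (G.map m).he)

lemma JObj.aug_w {K : Type v} [Category.{v} K] (G : K ⥤ JObj κ E Ob f)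
    (c : Cocone (JObj.aug G)) (k : K) :
    (G.obj k).e ≫ c.ι.app (.of k) = c.ι.app .star :=
  c.w (WithInitial.homTo k)

lemma JObj.aug_w2 {K : Type v} [Category.{v} K] (G : K ⥤ JObj κ E Ob f)
    (c : Cocone (JObj.aug G)) {k k' : K} (m : k ⟶ k') :
    (G.map m).t ≫ c.ι.app (.of k') = c.ι.app (.of k) :=
  c.w (WithInitial.incl.map m)

/-- The canonical cocone on the augmented diagram with point `X`. -/
def JObj.augCoconeX {K : Type v} [Category.{v} K] (G : K ⥤ JObj κ E Ob f) :
    Cocone (JObj.aug G) where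
  pt := X
  ι :=
    { app := fun j => match j with
        | .of k => (G.obj k).u
        | .star => f
      naturality := by
        intro j j' φ
        cases j with
        | star =>
          cases j' with
          | star =>
            show 𝟙 A ≫ f = f ≫ 𝟙 X
            exact (Category.id_comp f).trans (Category.comp_id f).symm
          | of k =>
            show (G.obj k).e ≫ (G.obj k).u = f ≫ 𝟙 X
            exact (G.obj k).heu.trans (Category.comp_id f).symm
        | of k =>
          cases j' with
          | star => exact (WithInitial.false_of_to_star φ).elim
          | of k' =>
            show (G.map (WithInitial.down φ)).t ≫ (G.obj k').u = (G.obj k).u ≫ 𝟙 X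
            exact (G.map (WithInitial.down φ)).hu.trans (Category.comp_id _).symm }

/-- The forgetful functor to the coslice. -/
def JObj.toUnder : JObj κ E Ob f ⥤ Under A where
  obj x := Under.mk x.e
  map φ := Under.homMk φ.t φ.he
  map_id x := by
    apply CategoryTheory.Under.UnderMorphism.ext
    rfl
  map_comp φ ψ := by
    apply CategoryTheory.Under.UnderMorphism.ext
    rfl

/-- Restriction of a cocone on the augmented identity diagram. -/
def JObj.restrictCocone (c : Cocone (JObj.aug (𝟭 (JObj κ E Ob f)))) :
    Cocone (JObj.toC : JObj κ E Ob f ⥤ C) where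
  pt := c.pt
  ι :=
    { app := fun x => c.ι.app (.of x)
      naturality := fun x y φ =>
        (JObj.aug_w2 (𝟭 _) c φ).trans (Category.comp_id _).symm }

noncomputable def JObj.restrictedIsColimit {c : Cocone (JObj.aug (𝟭 (JObj κ E Ob f)))}
    (hc : IsColimit c) (j₀ : JObj κ E Ob f)
    (hmax : ∀ x y : JObj κ E Ob f, ∃ (z : JObj κ E Ob f) (_ : x ⟶ z) (_ : y ⟶ z), True) :
    IsColimit (JObj.restrictCocone c) := by
  have hconst : ∀ (s : Cocone (JObj.toC : JObj κ E Ob f ⥤ C)) (x : JObj κ E Ob f),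
      x.e ≫ s.ι.app x = j₀.e ≫ s.ι.app j₀ := by
    intro s x
    obtain ⟨z, f1, f2, -⟩ := hmax x j₀
    have hw1 : f1.t ≫ s.ι.app z = s.ι.app x := s.w f1
    have hw2 : f2.t ≫ s.ι.app z = s.ι.app j₀ := s.w f2
    erw [← hw1, ← hw2, ← Category.assoc, ← Category.assoc, f1.he, f2.he]
  let ext : ∀ s : Cocone (JObj.toC : JObj κ E Ob f ⥤ C),
      Cocone (JObj.aug (𝟭 (JObj κ E Ob f))) := fun s =>
    { pt := s.pt
      ι :=
        { app := fun j => match j with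
            | .of x => s.ι.app x
            | .star => j₀.e ≫ s.ι.app j₀
          naturality := by
            intro j j' φ
            cases j with
            | star =>
              cases j' with
              | star =>
                show 𝟙 A ≫ (j₀.e ≫ s.ι.app j₀) = (j₀.e ≫ s.ι.app j₀) ≫ 𝟙 s.pt
                exact (Category.id_comp _).trans (Category.comp_id _).symm
              | of x =>
                show x.e ≫ s.ι.app x = (j₀.e ≫ s.ι.app j₀) ≫ 𝟙 s.pt
                exact (hconst s x).trans (Category.comp_id _).symm
            | of x =>
              cases j' with
              | star => exact (WithInitial.false_of_to_star φ).elim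
              | of y =>
                show ((𝟭 (JObj κ E Ob f)).map (WithInitial.down φ)).t ≫ s.ι.app y
                    = s.ι.app x ≫ 𝟙 s.pt
                exact (s.w (WithInitial.down φ)).trans (Category.comp_id _).symm } }
  refine
    { desc := fun s => hc.desc (ext s)
      fac := fun s x => hc.fac (ext s) (.of x)
      uniq := fun s dm hm => ?_ }
  refine hc.uniq (ext s) dm ?_
  intro j
  cases j with
  | of x => exact hm x
  | star =>
    show c.ι.app .star ≫ dm = j₀.e ≫ s.ι.app j₀
    erw [← JObj.aug_w (𝟭 _) c j₀, Category.assoc]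
    have hx := hm j₀
    show j₀.e ≫ c.ι.app (.of j₀) ≫ dm = j₀.e ≫ s.ι.app j₀
    erw [show c.ι.app (.of j₀) ≫ dm = s.ι.app j₀ from hx]



/-- Let `(E, M)` be a `κ`-presentable proper orthogonal factorization system on a locally
`κ`-presentable category.  Then every morphism `f : A ⟶ X` in `E` with `κ`-presentable
domain `A` is a `κ`-filtered colimit, in the coslice category `A/𝒜`, of morphisms in `E`
with `κ`-presentable codomain. -/
theorem statement19 {C : Type u} [Category.{v} C] (κ : Cardinal.{v}) (hreg : κ.IsRegular)
    (hC : LocallyPresentable κ C) (E M : MorphismProperty C)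
    -- `(E, M)` is an orthogonal factorization system:
    (hEiso : ∀ {X Y : C} (e : X ⟶ Y), IsIso e → E e)
    (hMiso : ∀ {X Y : C} (m : X ⟶ Y), IsIso m → M m)
    (hEcomp : ∀ {X Y Z : C} (e : X ⟶ Y) (e' : Y ⟶ Z), E e → E e' → E (e ≫ e'))
    (hMcomp : ∀ {X Y Z : C} (m : X ⟶ Y) (m' : Y ⟶ Z), M m → M m' → M (m ≫ m'))
    (hfact : ∀ {X Y : C} (f : X ⟶ Y),
      ∃ (Z : C) (e : X ⟶ Z) (m : Z ⟶ Y), E e ∧ M m ∧ e ≫ m = f)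
    (horth : ∀ {X Y X' Y' : C} (e : X ⟶ Y) (m : X' ⟶ Y'), E e → M m → UniqueLift e m)
    -- properness:
    (hepi : ∀ {X Y : C} (e : X ⟶ Y), E e → Epi e)
    (hmono : ∀ {X Y : C} (m : X ⟶ Y), M m → Mono m)
    -- `κ`-presentability of the factorization system: `r(E_κ) ⊆ M`:
    (hpres : ∀ {X Y : C} (m : X ⟶ Y),
      (∀ {A B : C} (e : A ⟶ B), E e → IsPresentableObj κ A → IsPresentableObj κ B →
        UniqueLift e m) → M m)
    {A X : C} (f : A ⟶ X) (hf : E f) (hA : IsPresentableObj κ A) :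
    ∃ (J : Type v) (_ : Category.{v} J) (D : J ⥤ Under A) (c : Limits.Cocone D),
      IsCardinalFiltered κ J ∧ Nonempty (Limits.IsColimit c) ∧ c.pt = Under.mk f ∧
        ∀ j : J, E (D.obj j).hom ∧ IsPresentableObj κ (D.obj j).right := by
  classical
  obtain ⟨hcolim, S, hSsmall, hSpres, hdecomp⟩ := hC
  haveI : HasColimits C := hcolim
  let W : Type v := Σ z : Shrink.{v} ↥S,
    ((((equivShrink ↥S).symm z : ↥S) : C) ⟶ (((equivShrink ↥S).symm z : ↥S) : C))
  let Ob : W → C := fun w => colimit (ppDiag (𝟙 _) w.2)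
  have hOb_norm : ∀ (B : C), IsPresentableObj κ B → ∃ w : W, Nonempty (Ob w ≅ B) := by
    intro B hB
    obtain ⟨Z, p, ⟨iso1⟩⟩ := exists_iso_ob hdecomp hB
    have h : (((equivShrink ↥S).symm (equivShrink ↥S Z) : ↥S) : C) = (Z : C) := by
      rw [Equiv.symm_apply_apply]
    refine ⟨⟨equivShrink ↥S Z, eqToHom h ≫ p ≫ eqToHom h.symm⟩, ?_⟩
    obtain ⟨iso2⟩ := ppColim_congr h p
    exact ⟨iso2.trans iso1⟩
  let JJ := JObj κ E Ob f
  have hornE : ∀ {P Q : C} (e : P ⟶ Q),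
      (∀ {X' Y' : C} (m : X' ⟶ Y'), M m → UniqueLift e m) → E e := by
    intro P Q e h
    exact mem_E_of_lifts E M @hEiso @hEcomp @hfact @hmono e @h
  -- every augmented colimit has its structure map in `E`
  have hstarE : ∀ {K : Type v} [Category.{v} K] (G : K ⥤ JJ),
      E ((colimit.cocone (JObj.aug G)).ι.app .star) := by
    intro K instK G
    apply hornE
    intro X' Y' m hm
    exact star_leg_lifts M (G ⋙ JObj.toC) (fun k => (G.obj k).e)
      (fun _ _ m' => (G.map m').he) (colimit.isColimit _)
      (fun k {X' Y'} m' hm' => horth (G.obj k).e m' (G.obj k).hE hm') m hm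
  -- (a) the index category is `κ`-filtered
  have hfilJJ : IsCardinalFiltered κ JJ := by
    intro K instK hKs G
    have hcc := colimit.isColimit (JObj.aug G)
    set cc := colimit.cocone (JObj.aug G) with hccdef
    have hEstar : E (cc.ι.app .star) := hstarE G
    have hpresB : IsPresentableObj κ cc.pt := by
      refine presentable_colimit_of_small hreg (withInitial_sigma_lt hreg hKs) ?_ hcc
      intro j
      cases j with
      | star => exact hA
      | of k => exact (G.obj k).hpres
    obtain ⟨w, ⟨ψ⟩⟩ := hOb_norm cc.pt hpresB
    have hfacs : cc.ι.app .star ≫ hcc.desc (JObj.augCoconeX G) = f := hcc.fac _ .star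
    have hfaco : ∀ k, cc.ι.app (.of k) ≫ hcc.desc (JObj.augCoconeX G) = (G.obj k).u :=
      fun k => hcc.fac _ (.of k)
    let newpt : JJ :=
      { w := w
        e := cc.ι.app .star ≫ ψ.inv
        u := ψ.hom ≫ hcc.desc (JObj.augCoconeX G)
        hE := hEcomp _ _ hEstar (hEiso ψ.inv inferInstance)
        heu := by
          erw [Category.assoc]
          erw [Iso.inv_hom_id_assoc, hfacs]
        hpres := presentable_of_iso hpresB ψ.symm }
    refine ⟨{ pt := newpt,
              ι :=
                { app := fun k =>
                    { t := cc.ι.app (.of k) ≫ ψ.inv,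
                      he := by
                        show (G.obj k).e ≫ cc.ι.app (.of k) ≫ ψ.inv
                            = cc.ι.app .star ≫ ψ.inv
                        erw [← Category.assoc, JObj.aug_w G cc k]; rfl,
                      hu := by
                        show (cc.ι.app (.of k) ≫ ψ.inv) ≫
                          ψ.hom ≫ hcc.desc (JObj.augCoconeX G) = (G.obj k).u
                        simp only [Category.assoc]
                        rw [Iso.inv_hom_id_assoc, hfaco k] },
                  naturality := fun {k k'} m => JHom.ext' (by
                    show (G.map m).t ≫ cc.ι.app (.of k') ≫ ψ.inv
                        = (cc.ι.app (.of k) ≫ ψ.inv) ≫ 𝟙 _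
                    erw [← Category.assoc, JObj.aug_w2 G cc m, Category.comp_id]; rfl) } }⟩
  haveI : IsFiltered JJ := isFiltered_of_isCardinalFiltered hreg JJ hfilJJ
  have hmax : ∀ x y : JJ, ∃ (z : JJ) (_ : x ⟶ z) (_ : y ⟶ z), True := fun x y =>
    ⟨IsFiltered.max x y, IsFiltered.leftToMax x y, IsFiltered.rightToMax x y, trivial⟩
  -- a base object
  obtain ⟨w₀, ⟨ψ₀⟩⟩ := hOb_norm A hA
  let j₀ : JJ :=
    { w := w₀
      e := ψ₀.inv
      u := ψ₀.hom ≫ f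
      hE := hEiso _ inferInstance
      heu := by rw [← Category.assoc, Iso.inv_hom_id, Category.id_comp]
      hpres := presentable_of_iso hA ψ₀.symm }
  -- (b) the colimit of the canonical diagram
  have hccP := colimit.isColimit (JObj.aug (𝟭 JJ))
  set ccP := colimit.cocone (JObj.aug (𝟭 JJ)) with hccPdef
  set t : ccP.pt ⟶ X := hccP.desc (JObj.augCoconeX (𝟭 JJ)) with htdef
  have hfacP : ∀ x : JJ, ccP.ι.app (.of x) ≫ t = x.u := fun x => hccP.fac _ (.of x)
  have haugw : ∀ x : JJ, x.e ≫ ccP.ι.app (.of x) = ccP.ι.app .star := fun x =>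
    JObj.aug_w (𝟭 JJ) ccP x
  have haugw2 : ∀ {x x' : JJ} (m : x ⟶ x'),
      m.t ≫ ccP.ι.app (.of x') = ccP.ι.app (.of x) := fun m =>
    JObj.aug_w2 (𝟭 JJ) ccP m
  have hfacPstar : ccP.ι.app .star ≫ t = f := hccP.fac _ .star
  have hrc : IsColimit (JObj.restrictCocone ccP) := JObj.restrictedIsColimit hccP j₀ hmax
  have hMt : M t := by
    apply hpres
    intro A' B' e' hE' hA' hB'
    intro u v hsq
    obtain ⟨x, u₁, hu₁⟩ := factor_through hfilJJ hrc hA' u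
    have hu₁' : u₁ ≫ ccP.ι.app (.of x) = u := hu₁
    have hpo := colimit.isColimit (pushoutDiag u₁ e')
    set pc := colimit.cocone (pushoutDiag u₁ e') with hpcdef
    obtain ⟨pι0, pinl, pinr, hp1, hp2, hpinl, hpinr⟩ :
        ∃ (pι0 : A' ⟶ pc.pt) (pinl : Ob x.w ⟶ pc.pt) (pinr : B' ⟶ pc.pt),
          u₁ ≫ pinl = pι0 ∧ e' ≫ pinr = pι0 ∧
            pinl = pc.ι.app (some (ULift.up true)) ∧
            pinr = pc.ι.app (some (ULift.up false)) :=
      ⟨pc.ι.app none, pc.ι.app (some (ULift.up true)), pc.ι.app (some (ULift.up false)),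
        pc.w (WidePushoutShape.Hom.init (ULift.up true)),
        pc.w (WidePushoutShape.Hom.init (ULift.up false)), rfl, rfl⟩
    have hEinl : E pinl := by
      rw [hpinl]
      apply hornE
      intro X' Y' m hm
      exact pushout_inl_lifts M u₁ e' hpo
        (fun {X' Y'} m' hm' => horth e' m' hE' hm') m hm
    have hppt : IsPresentableObj κ pc.pt := by
      refine presentable_colimit_of_small hreg
        (widePushout_sigma_lt hreg
          (lt_of_lt_of_le (Cardinal.lt_aleph0_of_finite _) hreg.aleph0_le)) ?_ hpo
      intro j
      match j with
      | none => exact hA'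
      | some ⟨true⟩ => exact x.hpres
      | some ⟨false⟩ => exact hB'
    have hvu : u₁ ≫ x.u = e' ≫ v := by
      erw [← hfacP x, ← Category.assoc, hu₁', hsq]
    set pdesc : pc.pt ⟶ X := hpo.desc
      { pt := X
        ι :=
          { app := fun j => match j with
              | none => e' ≫ v
              | some ⟨true⟩ => x.u
              | some ⟨false⟩ => v
            naturality := by
              intro j j' φ
              change WidePushoutShape.Hom _ _ at φ; cases φ with
              | id j => simp
              | init b =>
                obtain ⟨b⟩ := b
                cases b with
                | true =>
                  show u₁ ≫ x.u = (e' ≫ v) ≫ 𝟙 X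
                  rw [Category.comp_id]
                  exact hvu
                | false =>
                  show e' ≫ v = (e' ≫ v) ≫ 𝟙 X
                  rw [Category.comp_id] } } with hpdescdef
    have hpdesc1 : pinl ≫ pdesc = x.u := by
      rw [hpinl]
      exact hpo.fac _ (some (ULift.up true))
    have hpdesc2 : pinr ≫ pdesc = v := by
      rw [hpinr]
      exact hpo.fac _ (some (ULift.up false))
    obtain ⟨w', ⟨ψ'⟩⟩ := hOb_norm pc.pt hppt
    let y : JJ :=
      { w := w'
        e := x.e ≫ pinl ≫ ψ'.inv
        u := ψ'.hom ≫ pdesc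
        hE := hEcomp _ _ x.hE (hEcomp _ _ hEinl (hEiso ψ'.inv inferInstance))
        heu := by
          simp only [Category.assoc]
          rw [Iso.inv_hom_id_assoc, hpdesc1, x.heu]
        hpres := presentable_of_iso hppt ψ'.symm }
    let φxy : x ⟶ y :=
      { t := pinl ≫ ψ'.inv
        he := rfl
        hu := by
          show (pinl ≫ ψ'.inv) ≫ ψ'.hom ≫ pdesc = x.u
          simp only [Category.assoc]
          rw [Iso.inv_hom_id_assoc, hpdesc1] }
    have hstep : (pinl ≫ ψ'.inv) ≫ ccP.ι.app (.of y) = ccP.ι.app (.of x) :=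
      JObj.aug_w2 (𝟭 JJ) ccP φxy
    have hd1 : e' ≫ (pinr ≫ ψ'.inv) ≫ ccP.ι.app (.of y) = u := by
      erw [← Category.assoc, ← Category.assoc]
      rw [hp2, ← hp1]
      erw [Category.assoc, Category.assoc]
      erw [← Category.assoc pinl ψ'.inv, hstep]
      exact hu₁'
    have hd2 : ((pinr ≫ ψ'.inv) ≫ ccP.ι.app (.of y)) ≫ t = v := by
      erw [Category.assoc, Category.assoc]
      erw [hfacP y]
      show pinr ≫ ψ'.inv ≫ ψ'.hom ≫ pdesc = v
      rw [Iso.inv_hom_id_assoc, hpdesc2]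
    refine ⟨(pinr ≫ ψ'.inv) ≫ ccP.ι.app (.of y), ⟨hd1, hd2⟩, ?_⟩
    rintro d' ⟨h1', h2'⟩
    haveI : Epi e' := hepi e' hE'
    exact (cancel_epi e').mp (h1'.trans hd1.symm)
  -- `t` is an isomorphism
  obtain ⟨dX, ⟨hdX1, hdX2⟩, -⟩ := horth f t hf hMt (ccP.ι.app .star) (𝟙 X)
    (by erw [Category.comp_id, hfacPstar])
  haveI : Mono t := hmono t hMt
  have htd : t ≫ dX = 𝟙 ccP.pt := by
    rw [← cancel_mono t, Category.assoc, hdX2, Category.comp_id, Category.id_comp]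
  -- assemble the final cocone
  refine ⟨JJ, inferInstance, JObj.toUnder,
    { pt := Under.mk f
      ι :=
        { app := fun x => Under.homMk (ccP.ι.app (.of x) ≫ t)
            (by
              show x.e ≫ ccP.ι.app (.of x) ≫ t = f
              erw [← Category.assoc, haugw x, hfacPstar])
          naturality := fun {x x'} m => by
            apply CategoryTheory.Under.UnderMorphism.ext
            show m.t ≫ ccP.ι.app (.of x') ≫ t = (ccP.ι.app (.of x) ≫ t) ≫ 𝟙 X
            erw [← Category.assoc, haugw2 m]
            exact (Category.comp_id _).symm } },
    hfilJJ, ⟨?_⟩, rfl, ?_⟩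
  · -- the cocone is a colimit
    let extend : ∀ _s : Cocone (JObj.toUnder : JJ ⥤ Under A), Cocone (JObj.aug (𝟭 JJ)) :=
      fun s =>
      { pt := s.pt.right
        ι :=
          { app := fun j => match j with
              | .of x => (s.ι.app x).right
              | .star => s.pt.hom
            naturality := by
              intro j j' φ
              cases j with
              | star =>
                cases j' with
                | star =>
                  show 𝟙 A ≫ s.pt.hom = s.pt.hom ≫ 𝟙 s.pt.right
                  exact (Category.id_comp _).trans (Category.comp_id _).symm
                | of x =>
                  show x.e ≫ (s.ι.app x).right = s.pt.hom ≫ 𝟙 s.pt.right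
                  exact (Under.w (s.ι.app x)).trans (Category.comp_id _).symm
              | of x =>
                cases j' with
                | star => exact (WithInitial.false_of_to_star φ).elim
                | of x' =>
                  show ((𝟭 JJ).map (WithInitial.down φ)).t ≫ (s.ι.app x').right
                      = (s.ι.app x).right ≫ 𝟙 s.pt.right
                  have h := congrArg Under.Hom.right (s.w (WithInitial.down φ))
                  erw [Under.comp_right] at h
                  exact h.trans (Category.comp_id _).symm } }
    refine
      { desc := fun s => Under.homMk (dX ≫ hccP.desc (extend s))
          (by
            show f ≫ dX ≫ hccP.desc (extend s) = s.pt.hom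
            rw [← Category.assoc, hdX1]
            exact hccP.fac (extend s) .star)
        fac := fun s x => ?_
        uniq := fun s dm hm => ?_ }
    · apply CategoryTheory.Under.UnderMorphism.ext
      show (ccP.ι.app (.of x) ≫ t) ≫ dX ≫ hccP.desc (extend s) = (s.ι.app x).right
      rw [Category.assoc, ← Category.assoc t dX, htd, Category.id_comp]
      exact hccP.fac (extend s) (.of x)
    · apply CategoryTheory.Under.UnderMorphism.ext
      have key : t ≫ dm.right = hccP.desc (extend s) := by
        apply hccP.hom_ext
        intro j
        cases j with
        | of x =>
          rw [← Category.assoc, hccP.fac (extend s) (.of x)]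
          have h := congrArg Under.Hom.right (hm x)
          erw [Under.comp_right] at h
          exact h
        | star =>
          calc (ccP.ι.app .star ≫ t ≫ dm.right : A ⟶ s.pt.right)
              = ((ccP.ι.app .star ≫ t) ≫ dm.right : A ⟶ s.pt.right) := (Category.assoc _ _ _).symm
            _ = f ≫ dm.right := congrArg (fun z => z ≫ dm.right) hfacPstar
            _ = s.pt.hom := Under.w dm
            _ = (ccP.ι.app .star ≫ hccP.desc (extend s) : A ⟶ s.pt.right) := (hccP.fac (extend s) .star).symm
      show dm.right = dX ≫ hccP.desc (extend s)
      rw [← key, ← Category.assoc, hdX2, Category.id_comp]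
  · intro j
    constructor
    · show E (Under.mk j.e).hom
      simpa using j.hE
    · exact j.hpres


end Paper
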